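/- For a fixed finite set of atoms and each n ∈ ℕ, there are, modulo IPC-provable equivalence, only finitely many propositional formulas A with implication-nesting depth c→(A) ≤ n. -/

import Mathlib

inductive Fm : Type
  | bot : Fm
  | atom : ℕ → Fm
  | and : Fm → Fm → Fm
  | or : Fm → Fm → Fm
  | imp : Fm → Fm → Fm
deriving DecidableEq

namespace Fm

def neg (A : Fm) : Fm := A.imp .bot
def top : Fm := Fm.bot.imp .bot
def iff (A B : Fm) : Fm := (A.imp B).and (B.imp A)

def subst (θ : ℕ → Fm) : Fm → Fm
  | bot => bot
  | atom n => θ n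
  | and A B => (A.subst θ).and (B.subst θ)
  | or A B => (A.subst θ).or (B.subst θ)
  | imp A B => (A.subst θ).imp (B.subst θ)

def atoms : Fm → Finset ℕ
  | bot => ∅
  | atom n => {n}
  | and A B => A.atoms ∪ B.atoms
  | or A B => A.atoms ∪ B.atoms
  | imp A B => A.atoms ∪ B.atoms

/-- maximal nesting of implications in the left/overall: `c→`. -/
def cimp : Fm → ℕ
  | bot => 0
  | atom _ => 0
  | and A B => max A.cimp B.cimp
  | or A B => max A.cimp B.cimp
  | imp A B => 1 + max A.cimp B.cimp

end Fm

def bigAndL (l : List Fm) : Fm := l.foldr Fm.and Fm.top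
def bigOrL (l : List Fm) : Fm := l.foldr Fm.or Fm.bot

/-- nonempty disjunction -/
def bigOrNE : Fm → List Fm → Fm
  | A, [] => A
  | A, B :: l => A.or (bigOrNE B l)

/-- Hilbert-style intuitionistic propositional calculus. -/
inductive IPC : Fm → Prop
  | imp_k (A B : Fm) : IPC (A.imp (B.imp A))
  | imp_s (A B C : Fm) : IPC ((A.imp (B.imp C)).imp ((A.imp B).imp (A.imp C)))
  | and_intro (A B : Fm) : IPC (A.imp (B.imp (A.and B)))
  | and_left (A B : Fm) : IPC ((A.and B).imp A)
  | and_right (A B : Fm) : IPC ((A.and B).imp B)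
  | or_inl (A B : Fm) : IPC (A.imp (A.or B))
  | or_inr (A B : Fm) : IPC (B.imp (A.or B))
  | or_elim (A B C : Fm) : IPC ((A.imp C).imp ((B.imp C).imp ((A.or B).imp C)))
  | exfalso (A : Fm) : IPC (Fm.bot.imp A)
  | mp {A B : Fm} : IPC (A.imp B) → IPC A → IPC B

/-- Γ-preservativity in the logic T : `A ⊳_{T,Γ} B`. -/
def Pres (T : Fm → Prop) (Γ : Set Fm) (A B : Fm) : Prop :=
  ∀ E ∈ Γ, T (E.imp A) → T (E.imp B)

/-- substitutions are identity on the parameters. -/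
def IdOnPar (par : Finset ℕ) (θ : ℕ → Fm) : Prop :=
  ∀ p ∈ par, θ p = Fm.atom p

/-- implication-free formulas. -/
inductive NI : Fm → Prop
  | bot : NI .bot
  | atom (n : ℕ) : NI (.atom n)
  | and {A B : Fm} : NI A → NI B → NI (A.and B)
  | or {A B : Fm} : NI A → NI B → NI (A.or B)

/-- No Nested Implications in the Left. -/
inductive NNIL : Fm → Prop
  | bot : NNIL .bot
  | atom (n : ℕ) : NNIL (.atom n)
  | and {A B : Fm} : NNIL A → NNIL B → NNIL (A.and B)
  | or {A B : Fm} : NNIL A → NNIL B → NNIL (A.or B)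
  | imp {A B : Fm} : NI A → NNIL B → NNIL (A.imp B)

def IPCPrime (A : Fm) : Prop :=
  ∀ B C, IPC (A.imp (B.or C)) → IPC (A.imp B) ∨ IPC (A.imp C)

/-- T-components: `⋀Γ ∧ ⋀Δ`, Γ atoms, Δ implications with atomic
antecedents not T-provable from Γ. -/
def IsComponentOver (T : Fm → Prop) (B : Fm) : Prop :=
  ∃ (as : List ℕ) (imps : List (ℕ × Fm)),
    B = (bigAndL (as.map Fm.atom)).and
          (bigAndL (imps.map fun p => (Fm.atom p.1).imp p.2)) ∧
    ∀ p ∈ imps, ¬ T ((bigAndL (as.map Fm.atom)).imp (Fm.atom p.1))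

/-!
Over a finite set `G` of formulas, the formulas built from `⊥` and (formulas equivalent to)
members of `G` by `∧` and `∨` form a distributive lattice up to IPC-equivalence, and each of
them is equivalent to the disjunction of all conjunctions `⋀c`, `c ⊆ G`, that imply it. So there
are at most `2 ^ 2 ^ |G|` of them. A formula with `c→ ≤ n + 1` is such a combination over the
atoms and the implications `B → C` between representatives `B`, `C` of the finitely many classes
of formulas with `c→ ≤ n`, and the theorem follows by induction on `n`.
-/

inductive Proves (Γ : List Fm) : Fm → Prop
  | thm {A : Fm} : IPC A → Proves Γ A
  | hyp {A : Fm} : A ∈ Γ → Proves Γ A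
  | mp {A B : Fm} : Proves Γ (A.imp B) → Proves Γ A → Proves Γ B

theorem IPC.imp_self (A : Fm) : IPC (A.imp A) :=
  .mp (.mp (.imp_s A (A.imp A) A) (.imp_k A (A.imp A))) (.imp_k A A)

namespace Proves

variable {Γ : List Fm} {A B : Fm}

theorem imp_intro (h : Proves (A :: Γ) B) : Proves Γ (A.imp B) := by
  induction h with
  | thm h => exact .mp (.thm (.imp_k _ _)) (.thm h)
  | hyp hm =>
    rcases List.mem_cons.mp hm with rfl | hm
    · exact .thm (IPC.imp_self _)
    · exact .mp (.thm (.imp_k _ _)) (.hyp hm)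
  | mp _ _ ih₁ ih₂ => exact .mp (.mp (.thm (.imp_s _ _ _)) ih₁) ih₂

theorem toIPC (h : Proves [] A) : IPC A := by
  induction h with
  | thm h => exact h
  | hyp hm => simp at hm
  | mp _ _ ih₁ ih₂ => exact .mp ih₁ ih₂

theorem and_left (h : Proves Γ (A.and B)) : Proves Γ A := .mp (.thm (.and_left _ _)) h

theorem and_right (h : Proves Γ (A.and B)) : Proves Γ B := .mp (.thm (.and_right _ _)) h

theorem and_intro (hA : Proves Γ A) (hB : Proves Γ B) : Proves Γ (A.and B) :=
  .mp (.mp (.thm (.and_intro _ _)) hA) hB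

end Proves

namespace IPC

variable {A A' B B' C E : Fm}

theorem of_proves (h : Proves [A] B) : IPC (A.imp B) := h.imp_intro.toIPC

theorem of_proves₂ (h : Proves [B, A] C) : IPC (A.imp (B.imp C)) := h.imp_intro.imp_intro.toIPC

theorem imp_trans (h₁ : IPC (A.imp B)) (h₂ : IPC (B.imp C)) : IPC (A.imp C) :=
  of_proves (.mp (.thm h₂) (.mp (.thm h₁) (.hyp (by simp))))

theorem imp_and_intro (hA : IPC (E.imp A)) (hB : IPC (E.imp B)) : IPC (E.imp (A.and B)) :=
  of_proves (.and_intro (.mp (.thm hA) (.hyp (by simp))) (.mp (.thm hB) (.hyp (by simp))))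

theorem or_imp_intro (hA : IPC (A.imp C)) (hB : IPC (B.imp C)) : IPC ((A.or B).imp C) :=
  .mp (.mp (.or_elim A B C) hA) hB

theorem imp_top (E : Fm) : IPC (E.imp Fm.top) := .mp (.imp_k Fm.top E) (imp_self Fm.bot)

theorem and_imp_mono (hA : IPC (A.imp A')) (hB : IPC (B.imp B')) :
    IPC ((A.and B).imp (A'.and B')) :=
  imp_and_intro (imp_trans (.and_left A B) hA) (imp_trans (.and_right A B) hB)

theorem imp_imp_mono (hA : IPC (A'.imp A)) (hB : IPC (B.imp B')) :
    IPC ((A.imp B).imp (A'.imp B')) :=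
  of_proves₂ (.mp (.thm hB) (.mp (.hyp (by simp)) (.mp (.thm hA) (.hyp (by simp)))))

theorem and_imp_of_imp_imp (h : IPC (A.imp (B.imp C))) : IPC ((A.and B).imp C) :=
  of_proves <|
    .mp (.mp (.thm h) (.and_left (B := B) (.hyp (by simp)))) (.and_right (A := A) (.hyp (by simp)))

theorem imp_imp_of_and_imp (h : IPC ((A.and B).imp C)) : IPC (A.imp (B.imp C)) :=
  of_proves₂ (.mp (.thm h) (.and_intro (.hyp (by simp)) (.hyp (by simp))))

theorem imp_comm (h : IPC (A.imp (B.imp C))) : IPC (B.imp (A.imp C)) :=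
  of_proves₂ (.mp (Γ := [A, B]) (.mp (.thm h) (.hyp (by simp))) (.hyp (by simp)))

end IPC

def IPCEquiv (A B : Fm) : Prop := IPC (A.imp B) ∧ IPC (B.imp A)

theorem IPCEquiv.refl (A : Fm) : IPCEquiv A A := ⟨IPC.imp_self A, IPC.imp_self A⟩

theorem IPCEquiv.imp {A A' B B' : Fm} (hA : IPCEquiv A A') (hB : IPCEquiv B B') :
    IPCEquiv (A.imp B) (A'.imp B') :=
  ⟨IPC.imp_imp_mono hA.2 hB.1, IPC.imp_imp_mono hA.1 hB.2⟩

theorem IPC.iff_of_ipcEquiv {A B : Fm} (h : IPCEquiv A B) : IPC (A.iff B) :=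
  .mp (.mp (.and_intro _ _) h.1) h.2

section BigConnectives

variable {l : List Fm} {A E : Fm}

theorem bigAndL_imp_of_mem (h : A ∈ l) : IPC ((bigAndL l).imp A) := by
  induction l with
  | nil => simp at h
  | cons B l ih =>
    rcases List.mem_cons.mp h with rfl | h
    · exact .and_left _ _
    · exact IPC.imp_trans (.and_right _ _) (ih h)

theorem imp_bigAndL (h : ∀ A ∈ l, IPC (E.imp A)) : IPC (E.imp (bigAndL l)) := by
  induction l with
  | nil => exact IPC.imp_top E
  | cons B l ih => exact IPC.imp_and_intro (h B (by simp)) (ih fun A hA => h A (by simp [hA]))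

theorem imp_bigOrL_of_mem (h : A ∈ l) : IPC (A.imp (bigOrL l)) := by
  induction l with
  | nil => simp at h
  | cons B l ih =>
    rcases List.mem_cons.mp h with rfl | h
    · exact .or_inl _ _
    · exact IPC.imp_trans (ih h) (.or_inr _ _)

theorem bigOrL_imp (h : ∀ A ∈ l, IPC (A.imp E)) : IPC ((bigOrL l).imp E) := by
  induction l with
  | nil => exact .exfalso E
  | cons B l ih => exact IPC.or_imp_intro (h B (by simp)) (ih fun A hA => h A (by simp [hA]))

noncomputable def bigAnd (s : Finset Fm) : Fm := bigAndL s.toList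

noncomputable def bigOr (s : Finset Fm) : Fm := bigOrL s.toList

variable {s t : Finset Fm}

theorem bigAnd_imp_of_mem (h : A ∈ s) : IPC ((bigAnd s).imp A) :=
  bigAndL_imp_of_mem (Finset.mem_toList.mpr h)

theorem imp_bigAnd (h : ∀ A ∈ s, IPC (E.imp A)) : IPC (E.imp (bigAnd s)) :=
  imp_bigAndL fun A hA => h A (Finset.mem_toList.mp hA)

theorem imp_bigOr_of_mem (h : A ∈ s) : IPC (A.imp (bigOr s)) :=
  imp_bigOrL_of_mem (Finset.mem_toList.mpr h)

theorem bigOr_imp (h : ∀ A ∈ s, IPC (A.imp E)) : IPC ((bigOr s).imp E) :=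
  bigOrL_imp fun A hA => h A (Finset.mem_toList.mp hA)

theorem bigAnd_anti (h : s ⊆ t) : IPC ((bigAnd t).imp (bigAnd s)) :=
  imp_bigAnd fun _ hA => bigAnd_imp_of_mem (h hA)

theorem and_bigAnd_imp_bigAnd_union : IPC (((bigAnd s).and (bigAnd t)).imp (bigAnd (s ∪ t))) :=
  imp_bigAnd fun _ hA => (Finset.mem_union.mp hA).elim
    (fun h => IPC.imp_trans (.and_left _ _) (bigAnd_imp_of_mem h))
    (fun h => IPC.imp_trans (.and_right _ _) (bigAnd_imp_of_mem h))

theorem bigOr_and_bigOr_imp (h : ∀ A ∈ s, ∀ B ∈ t, IPC ((A.and B).imp E)) :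
    IPC (((bigOr s).and (bigOr t)).imp E) :=
  IPC.and_imp_of_imp_imp <| bigOr_imp fun A hA => IPC.imp_comm <| bigOr_imp fun B hB =>
    IPC.imp_comm (IPC.imp_imp_of_and_imp (h A hA B hB))

end BigConnectives

inductive Generated (G : Finset Fm) : Fm → Prop
  | bot : Generated G .bot
  | of_equiv {A B : Fm} : B ∈ G → IPCEquiv A B → Generated G A
  | and {A B : Fm} : Generated G A → Generated G B → Generated G (A.and B)
  | or {A B : Fm} : Generated G A → Generated G B → Generated G (A.or B)

section NormalForm

variable (G : Finset Fm)

open Classical in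
noncomputable def implicants (A : Fm) : Finset (Finset Fm) :=
  G.powerset.filter fun c => IPC ((bigAnd c).imp A)

noncomputable def dnf (A : Fm) : Fm := bigOr ((implicants G A).image bigAnd)

noncomputable def dnfs : Finset Fm := G.powerset.powerset.image fun T => bigOr (T.image bigAnd)

variable {G}

theorem mem_implicants {A : Fm} {c : Finset Fm} :
    c ∈ implicants G A ↔ c ⊆ G ∧ IPC ((bigAnd c).imp A) := by
  classical
  simp [implicants]

theorem dnf_mem_dnfs (A : Fm) : dnf G A ∈ dnfs G :=
  Finset.mem_image_of_mem _ <| Finset.mem_powerset.mpr fun _ hc =>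
    Finset.mem_powerset.mpr (mem_implicants.mp hc).1

theorem dnf_imp (A : Fm) : IPC ((dnf G A).imp A) :=
  bigOr_imp fun _ hx => by
    obtain ⟨c, hc, rfl⟩ := Finset.mem_image.mp hx
    exact (mem_implicants.mp hc).2

theorem bigAnd_imp_dnf {A : Fm} {c : Finset Fm} (hc : c ⊆ G) (h : IPC ((bigAnd c).imp A)) :
    IPC ((bigAnd c).imp (dnf G A)) :=
  imp_bigOr_of_mem (Finset.mem_image_of_mem _ (mem_implicants.mpr ⟨hc, h⟩))

theorem dnf_imp_dnf {A B : Fm} (h : IPC (A.imp B)) : IPC ((dnf G A).imp (dnf G B)) :=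
  bigOr_imp fun _ hx => by
    obtain ⟨c, hc, rfl⟩ := Finset.mem_image.mp hx
    obtain ⟨hcG, hcA⟩ := mem_implicants.mp hc
    exact bigAnd_imp_dnf hcG (IPC.imp_trans hcA h)

theorem Generated.imp_dnf {A : Fm} (hA : Generated G A) : IPC (A.imp (dnf G A)) := by
  induction hA with
  | bot => exact .exfalso _
  | @of_equiv A B hB hAB =>
    exact IPC.imp_trans (imp_bigAnd (s := {B}) fun _ h => Finset.mem_singleton.mp h ▸ hAB.1)
      (bigAnd_imp_dnf (Finset.singleton_subset_iff.mpr hB)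
        (IPC.imp_trans (bigAnd_imp_of_mem (Finset.mem_singleton_self B)) hAB.2))
  | @or A B _ _ ihA ihB =>
    exact IPC.or_imp_intro (IPC.imp_trans ihA (dnf_imp_dnf (.or_inl A B)))
      (IPC.imp_trans ihB (dnf_imp_dnf (.or_inr A B)))
  | @and A B _ _ ihA ihB =>
    -- implicants `c₁` of `A` and `c₂` of `B` give the implicant `c₁ ∪ c₂` of `A ∧ B`
    refine IPC.imp_trans (IPC.and_imp_mono ihA ihB) (bigOr_and_bigOr_imp fun _ hx _ hy => ?_)
    obtain ⟨c₁, hc₁, rfl⟩ := Finset.mem_image.mp hx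
    obtain ⟨c₂, hc₂, rfl⟩ := Finset.mem_image.mp hy
    obtain ⟨hc₁G, hc₁A⟩ := mem_implicants.mp hc₁
    obtain ⟨hc₂G, hc₂B⟩ := mem_implicants.mp hc₂
    refine IPC.imp_trans and_bigAnd_imp_bigAnd_union
      (bigAnd_imp_dnf (Finset.union_subset hc₁G hc₂G) (IPC.imp_and_intro ?_ ?_))
    · exact IPC.imp_trans (bigAnd_anti Finset.subset_union_left) hc₁A
    · exact IPC.imp_trans (bigAnd_anti Finset.subset_union_right) hc₂B

theorem Generated.exists_mem_dnfs {A : Fm} (hA : Generated G A) :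
    ∃ B ∈ dnfs G, IPCEquiv A B :=
  ⟨dnf G A, dnf_mem_dnfs A, hA.imp_dnf, dnf_imp A⟩

end NormalForm

theorem generated_of_cimp_le {S : Finset ℕ} {L : Finset Fm} {n : ℕ}
    (hL : ∀ A : Fm, A.atoms ⊆ S → A.cimp < n → ∃ B ∈ L, IPCEquiv A B) (A : Fm)
    (hS : A.atoms ⊆ S) (hn : A.cimp ≤ n) :
    Generated (S.image Fm.atom ∪ Finset.image₂ Fm.imp L L) A := by
  induction A with
  | bot => exact .bot
  | atom p =>
    refine .of_equiv (Finset.mem_union_left _ (Finset.mem_image_of_mem _ ?_)) (.refl _)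
    exact hS (Finset.mem_singleton_self p)
  | and A B ihA ihB =>
    simp only [Fm.atoms, Finset.union_subset_iff, Fm.cimp, max_le_iff] at hS hn
    exact .and (ihA hS.1 hn.1) (ihB hS.2 hn.2)
  | or A B ihA ihB =>
    simp only [Fm.atoms, Finset.union_subset_iff, Fm.cimp, max_le_iff] at hS hn
    exact .or (ihA hS.1 hn.1) (ihB hS.2 hn.2)
  | imp A B =>
    simp only [Fm.atoms, Finset.union_subset_iff, Fm.cimp] at hS hn
    obtain ⟨A', hA', hAA'⟩ := hL A hS.1 (by omega)
    obtain ⟨B', hB', hBB'⟩ := hL B hS.2 (by omega)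
    exact .of_equiv (Finset.mem_union_right _ (Finset.mem_image₂_of_mem hA' hB')) (hAA'.imp hBB')

theorem exists_finset_ipcEquiv_of_cimp_lt (S : Finset ℕ) (n : ℕ) :
    ∃ L : Finset Fm, ∀ A : Fm, A.atoms ⊆ S → A.cimp < n → ∃ B ∈ L, IPCEquiv A B := by
  induction n with
  | zero => exact ⟨∅, fun _ _ h => absurd h (Nat.not_lt_zero _)⟩
  | succ n ih =>
    obtain ⟨L, hL⟩ := ih
    exact ⟨_, fun A hS hn =>
      (generated_of_cimp_le hL A hS (Nat.lt_succ_iff.mp hn)).exists_mem_dnfs⟩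

theorem stmt_9 (S : Finset ℕ) (n : ℕ) :
    ∃ L : Finset Fm, ∀ A : Fm, A.atoms ⊆ S → A.cimp ≤ n →
      ∃ B ∈ L, IPC (A.iff B) := by
  obtain ⟨L, hL⟩ := exists_finset_ipcEquiv_of_cimp_lt S (n + 1)
  refine ⟨L, fun A hS hn => ?_⟩
  obtain ⟨B, hB, hAB⟩ := hL A hS (Nat.lt_succ_of_le hn)
  exact ⟨B, hB, IPC.iff_of_ipcEquiv hAB⟩
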